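/- Let D ≥ 2 be a squarefree integer and K = ℚ(√D). If α = (⌈ξ_D⌉ + 2) + ω_D, then α is totally positive and p_K(α) = 4. In particular, every real quadratic field contains a totally positive integer with exactly 4 partitions. -/

import Mathlib

noncomputable section

/-- `ω_D`, so that `(1, ω_D)` is an integral basis of `𝓞(ℚ(√D))`. -/
def omegaD (D : ℤ) : ℝ := if D % 4 = 1 then (1 + Real.sqrt D) / 2 else Real.sqrt D

/-- The Galois conjugate `ω_D′` of `ω_D`. -/
def omegaD' (D : ℤ) : ℝ := if D % 4 = 1 then (1 - Real.sqrt D) / 2 else -(Real.sqrt D)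

/-- `ξ_D = -ω_D′`. -/
def xiD (D : ℤ) : ℝ := -omegaD' D

/-- The real embedding of `𝓞 K`, an element `(x, y)` in the integral basis
`(1, ω_D)` being sent to `x + y ω_D`. -/
def emb (D : ℤ) (a : ℤ × ℤ) : ℝ := a.1 + a.2 * omegaD D

/-- The conjugate real embedding, sending `(x, y)` to `x + y ω_D′`. -/
def embConj (D : ℤ) (a : ℤ × ℤ) : ℝ := a.1 + a.2 * omegaD' D

/-- An element of `𝓞 K` is totally positive if it and its conjugate are positive. -/
def TotPos (D : ℤ) (a : ℤ × ℤ) : Prop := 0 < emb D a ∧ 0 < embConj D a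

/-- The partition function `p_K` of `K = ℚ(√D)`: the number of multisets of
totally positive integers of `K` with sum `α`. -/
def pK (D : ℤ) (α : ℤ × ℤ) : ℕ :=
  Nat.card {m : Multiset (ℤ × ℤ) // (∀ β ∈ m, TotPos D β) ∧ m.sum = α}

end

/-!
Write `c = ⌈ξ_D⌉` and a summand as `x + y ω_D`, so that total positivity says `x > y ξ_D` and
`x > -y ω_D`. A summand with `y ≤ -1` would have `x ≥ ⌈ω_D⌉`, while the other summands, whose
`y`-parts add up to at least `2`, have a totally nonnegative sum and hence `x`-parts adding up to at
least `⌈2 ξ_D⌉`; as `⌈ω_D⌉ + ⌈2 ξ_D⌉ ≥ c + 3`, this is too much for `α = (c + 2) + ω_D`. So exactly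
one summand is `x + ω_D`, with `x ≥ c`, and the others are positive rational integers adding up to
`c + 2 - x ≤ 2`: the `1 + 1 + 2` partitions of `0`, `1` and `2`. Since `ξ_D` is irrational, every
`x ≥ c` does give a totally positive `x + ω_D`.
-/

open Multiset

lemma Int.ceil_add_one_le_ceil_two_mul {k : Type*} [Field k] [LinearOrder k] [IsStrictOrderedRing k]
    [FloorRing k] {r : k} (hr : 1 / 2 < r) : ⌈r⌉ + 1 ≤ ⌈2 * r⌉ := by
  rw [Int.add_one_le_iff, Int.lt_ceil]
  rcases le_or_gt 1 r with h | h
  · linarith [Int.ceil_lt_add_one r]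
  · have : (⌈r⌉ : k) ≤ 1 := mod_cast Int.ceil_le.mpr (by simpa using h.le)
    linarith

lemma Multiset.snd_eq_zero_of_sum_snd_eq_zero {M N : Type*} [AddCommMonoid M] [AddCommMonoid N]
    [PartialOrder N] [IsOrderedAddMonoid N] {m : Multiset (M × N)} (hnn : ∀ β ∈ m, 0 ≤ β.2)
    (h : m.sum.2 = 0) : ∀ β ∈ m, β.2 = 0 := by
  intro β hβ
  have := single_le_sum (forall_mem_map_iff.mpr hnn) _ (mem_map_of_mem Prod.snd hβ)
  rw [← snd_sum, h] at this
  exact le_antisymm this (hnn β hβ)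

lemma Multiset.exists_eq_cons_of_sum_snd_eq_one {M : Type*} [AddCommMonoid M]
    {m : Multiset (M × ℤ)} (hnn : ∀ β ∈ m, 0 ≤ β.2) (h : m.sum.2 = 1) :
    ∃ x r, m = (x, 1) ::ₘ r ∧ ∀ β ∈ r, β.2 = 0 := by
  obtain ⟨γ, hγ, hγpos⟩ : ∃ γ ∈ m, 0 < γ.2 := by
    by_contra! hle
    have := sum_le_card_nsmul (m.map Prod.snd) 0 (forall_mem_map_iff.mpr hle)
    rw [← snd_sum, h] at this
    simp at this
  obtain ⟨r, rfl⟩ := exists_cons_of_mem hγ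
  have hr : ∀ β ∈ r, 0 ≤ β.2 := fun β hβ => hnn β (mem_cons_of_mem hβ)
  have hrsum : 0 ≤ r.sum.2 := by rw [snd_sum]; exact sum_nonneg (forall_mem_map_iff.mpr hr)
  rw [sum_cons, Prod.snd_add] at h
  have hγ1 : γ.2 = 1 := by omega
  exact ⟨γ.1, r, by rw [← hγ1], snd_eq_zero_of_sum_snd_eq_zero hr (by omega)⟩

lemma Multiset.injOn_cons_snd_one {α : Type*} (g : Multiset (α × ℤ) → α) :
    Set.InjOn (fun r => (g r, 1) ::ₘ r) {r | ∀ β ∈ r, β.2 = 0} := by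
  intro r hr r' hr' h
  have := congrArg (filter fun β : α × ℤ => β.2 = 0) h
  simpa [filter_eq_self.mpr hr, filter_eq_self.mpr hr'] using this

variable {D : ℤ}

lemma omegaD_add_xiD_nonneg (D : ℤ) : 0 ≤ omegaD D + xiD D := by
  unfold omegaD xiD omegaD'
  split_ifs <;> ring_nf <;> positivity

lemma one_lt_omegaD (hD : 2 ≤ D) : 1 < omegaD D := by
  have : 1 < √(D : ℝ) := Real.lt_sqrt_of_sq_lt (by norm_num; exact_mod_cast hD)
  unfold omegaD
  split_ifs <;> linarith

lemma half_lt_xiD (hD : 2 ≤ D) : 1 / 2 < xiD D := by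
  unfold xiD omegaD'
  split_ifs with h
  · have : 2 < √(D : ℝ) := Real.lt_sqrt_of_sq_lt (by norm_num; exact_mod_cast (by omega : 4 < D))
    linarith
  · have : 1 < √(D : ℝ) := Real.lt_sqrt_of_sq_lt (by norm_num; exact_mod_cast hD)
    linarith

lemma irrational_xiD (hD : 2 ≤ D) (hsf : Squarefree D) : Irrational (xiD D) := by
  have hsq : ¬IsSquare D := by
    rintro ⟨r, rfl⟩
    rcases Int.isUnit_iff.mp (hsf r dvd_rfl) with rfl | rfl <;> omega
  have hirr : Irrational √(D : ℝ) := (irrational_sqrt_intCast_iff_of_nonneg (by omega)).mpr hsq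
  unfold xiD omegaD'
  split_ifs
  · have := (hirr.sub_intCast 1).div_natCast two_ne_zero
    convert this using 1
    push_cast
    ring
  · simpa using hirr

lemma embConj_eq_sub (a : ℤ × ℤ) : embConj D a = a.1 - a.2 * xiD D := by
  simp only [embConj, xiD]
  ring

lemma embConj_add (a b : ℤ × ℤ) : embConj D (a + b) = embConj D a + embConj D b := by
  simp only [embConj, Prod.fst_add, Prod.snd_add]
  push_cast
  ring

lemma embConj_sum_nonneg {m : Multiset (ℤ × ℤ)} (hm : ∀ β ∈ m, TotPos D β) :
    0 ≤ embConj D m.sum := by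
  induction m using Multiset.induction_on with
  | empty => simp [embConj]
  | cons β m ih =>
    rw [sum_cons, embConj_add]
    exact add_nonneg (hm β (mem_cons_self β m)).2.le (ih fun γ hγ => hm γ (mem_cons_of_mem hγ))

lemma totPos_mk_zero_iff {x : ℤ} : TotPos D (x, 0) ↔ 0 < x := by
  simp [TotPos, emb, embConj]

lemma totPos_mk_one_iff (hirr : Irrational (xiD D)) {x : ℤ} :
    TotPos D (x, 1) ↔ ⌈xiD D⌉ ≤ x := by
  have hconj : embConj D (x, 1) = x - xiD D := by simp [embConj_eq_sub]
  have hemb : emb D (x, 1) = (x - xiD D) + (omegaD D + xiD D) := by simp [emb]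
  rw [TotPos, hconj, hemb, Int.ceil_le, sub_pos]
  constructor
  · exact fun h => h.2.le
  · intro h
    have hlt : xiD D < x := lt_of_le_of_ne h (hirr.ne_int x)
    exact ⟨by linarith [omegaD_add_xiD_nonneg D], hlt⟩

def IsPartition (D : ℤ) (α : ℤ × ℤ) (m : Multiset (ℤ × ℤ)) : Prop :=
  (∀ β ∈ m, TotPos D β) ∧ m.sum = α

lemma pK_eq_card (D : ℤ) (α : ℤ × ℤ) : pK D α = Nat.card {m // IsPartition D α m} := rfl

lemma IsPartition.snd_nonneg (hξ : 1 / 2 < xiD D) (hω : 1 < omegaD D) {m : Multiset (ℤ × ℤ)}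
    (hm : IsPartition D (⌈xiD D⌉ + 2, 1) m) : ∀ β ∈ m, 0 ≤ β.2 := by
  intro β hβ
  by_contra! hneg
  obtain ⟨r, rfl⟩ := exists_cons_of_mem hβ
  have hsum : β + r.sum = (⌈xiD D⌉ + 2, 1) := by simpa using hm.2
  have hsum₁ : β.1 + r.sum.1 = ⌈xiD D⌉ + 2 := congrArg Prod.fst hsum
  have hsum₂ : (2 : ℝ) ≤ r.sum.2 := by
    have := congrArg Prod.snd hsum
    simp only [Prod.snd_add] at this
    exact_mod_cast (by omega : 2 ≤ r.sum.2)
  have hβ₂ : (β.2 : ℝ) ≤ -1 := by exact_mod_cast (by omega : β.2 ≤ -1)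
  have hβpos := (hm.1 β (mem_cons_self β r)).1
  have hrpos := embConj_sum_nonneg (D := D) fun γ hγ => hm.1 γ (mem_cons_of_mem hγ)
  rw [emb] at hβpos
  rw [embConj_eq_sub] at hrpos
  have hβ₁ : ⌈omegaD D⌉ ≤ β.1 := Int.ceil_le.mpr (by nlinarith)
  have hr₁ : ⌈2 * xiD D⌉ ≤ r.sum.1 := Int.ceil_le.mpr (by nlinarith)
  have hω₂ : 1 < ⌈omegaD D⌉ := Int.lt_ceil.mpr (by exact_mod_cast hω)
  have := Int.ceil_add_one_le_ceil_two_mul hξ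
  omega

def rationalPartitionsLeTwo : Finset (Multiset (ℤ × ℤ)) :=
  {0, {(1, 0)}, {(2, 0)}, {(1, 0), (1, 0)}}

lemma mem_rationalPartitionsLeTwo_iff {r : Multiset (ℤ × ℤ)} :
    r ∈ rationalPartitionsLeTwo ↔ (∀ β ∈ r, β.2 = 0 ∧ 0 < β.1) ∧ r.sum.1 ≤ 2 := by
  constructor
  · simp only [rationalPartitionsLeTwo, Finset.mem_insert, Finset.mem_singleton]
    rintro (rfl | rfl | rfl | rfl) <;> simp
  · rintro ⟨hr, hsum⟩
    have hcard : card r ≤ 2 := by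
      have := card_nsmul_le_sum (s := r.map Prod.fst) (a := 1)
        (forall_mem_map_iff.mpr fun β hβ => (hr β hβ).2)
      rw [← fst_sum] at this
      simpa using this.trans hsum
    simp only [rationalPartitionsLeTwo, Finset.mem_insert, Finset.mem_singleton]
    rcases (by omega : card r = 0 ∨ card r = 1 ∨ card r = 2) with h | h | h
    · exact .inl (card_eq_zero.mp h)
    · obtain ⟨⟨x, y⟩, rfl⟩ := card_eq_one.mp h
      simp only [mem_singleton, forall_eq, sum_singleton] at hr hsum
      obtain ⟨rfl, hx⟩ := hr
      interval_cases x <;> simp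
    · obtain ⟨⟨x, y⟩, ⟨x', y'⟩, rfl⟩ := card_eq_two.mp h
      simp only [insert_eq_cons, mem_cons, mem_singleton, forall_eq_or_imp, forall_eq,
        sum_cons, sum_singleton, Prod.fst_add] at hr hsum
      obtain ⟨⟨rfl, hx⟩, rfl, hx'⟩ := hr
      obtain rfl : x = 1 := by omega
      obtain rfl : x' = 1 := by omega
      simp

lemma isPartition_iff (hξ : 1 / 2 < xiD D) (hω : 1 < omegaD D) (hirr : Irrational (xiD D))
    {m : Multiset (ℤ × ℤ)} :
    IsPartition D (⌈xiD D⌉ + 2, 1) m ↔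
      ∃ r, ((∀ β ∈ r, β.2 = 0 ∧ 0 < β.1) ∧ r.sum.1 ≤ 2) ∧
        (⌈xiD D⌉ + 2 - r.sum.1, 1) ::ₘ r = m := by
  constructor
  · intro hm
    obtain ⟨x, r, rfl, hr⟩ :=
      exists_eq_cons_of_sum_snd_eq_one (hm.snd_nonneg hξ hω) (by rw [hm.2])
    have hsum : x + r.sum.1 = ⌈xiD D⌉ + 2 := by simpa using congrArg Prod.fst hm.2
    have hx : ⌈xiD D⌉ ≤ x := (totPos_mk_one_iff hirr).mp (hm.1 _ (mem_cons_self _ _))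
    have hrpos : ∀ β ∈ r, β.2 = 0 ∧ 0 < β.1 := by
      rintro ⟨x, y⟩ hβ
      obtain rfl : y = 0 := hr _ hβ
      exact ⟨rfl, totPos_mk_zero_iff.mp (hm.1 _ (mem_cons_of_mem hβ))⟩
    exact ⟨r, ⟨hrpos, by omega⟩, by rw [← hsum]; simp⟩
  · rintro ⟨r, ⟨hr, hr₁⟩, rfl⟩
    refine ⟨?_, ?_⟩
    · intro β hβ
      rcases mem_cons.mp hβ with rfl | hβ
      · exact (totPos_mk_one_iff hirr).mpr (by omega)
      · obtain ⟨x, y⟩ := β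
        obtain ⟨rfl, hx⟩ := hr _ hβ
        exact totPos_mk_zero_iff.mpr hx
    · have hr₂ : r.sum.2 = 0 := by
        rw [snd_sum]
        exact sum_eq_zero (forall_mem_map_iff.mpr fun β hβ => (hr β hβ).1)
      ext <;> simp [hr₂]

theorem four_partitions (D : ℤ) (hD : 2 ≤ D) (hsf : Squarefree D) :
    TotPos D (⌈xiD D⌉ + 2, 1) ∧ pK D (⌈xiD D⌉ + 2, 1) = 4 := by
  have hirr := irrational_xiD hD hsf
  refine ⟨(totPos_mk_one_iff hirr).mpr (by omega), ?_⟩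
  set f : Multiset (ℤ × ℤ) → Multiset (ℤ × ℤ) := fun r => (⌈xiD D⌉ + 2 - r.sum.1, 1) ::ₘ r
  have hpartitions (m : Multiset (ℤ × ℤ)) :
      IsPartition D (⌈xiD D⌉ + 2, 1) m ↔ m ∈ rationalPartitionsLeTwo.image f := by
    simp only [isPartition_iff (half_lt_xiD hD) (one_lt_omegaD hD) hirr, Finset.mem_image,
      mem_rationalPartitionsLeTwo_iff, f]
  have hinj : Set.InjOn f rationalPartitionsLeTwo := (injOn_cons_snd_one _).mono
    fun r hr β hβ => ((mem_rationalPartitionsLeTwo_iff.mp hr).1 β hβ).1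
  rw [pK_eq_card, Nat.card_congr (Equiv.subtypeEquivRight hpartitions), Nat.card_eq_finsetCard,
    Finset.card_image_of_injOn hinj]
  decide
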